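/- Let M be a positive integer, let q ∈ ℝ^M have all components nonnegative, let x ∈ ℝ^M, let ε > 0, and let 𝒞 be a nonempty set of M×M real matrices. Suppose there exists C^V ∈ 𝒞 such that (C^V)ᵀ·𝟙 − C^V·𝟙 + x = −ε·𝟙, where 𝟙 ∈ ℝ^M is the all-ones vector, and suppose C* ∈ 𝒞 maximizes the function C ↦ qᵀ·(C − Cᵀ)·𝟙 over 𝒞. Then qᵀ·((C*)ᵀ − C*)·𝟙 + qᵀ·x ≤ −ε·∑_{i=1}^M q_i. -/
import Mathlib


open Matrix Finset

/-- If some feasible service matrix `C^V` drains every queue at rate `ε` beyond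
the arrival vector `x`, and `C*` maximizes the weighted back pressure
`qᵀ(C − Cᵀ)𝟙` over the feasible set, then
`qᵀ((C*)ᵀ − C*)𝟙 + qᵀx ≤ −ε ∑ᵢ qᵢ`. -/
theorem mbp_negative_drift_term {M : ℕ} (hM : 0 < M)
    (q x : Fin M → ℝ) (hq : ∀ i, 0 ≤ q i)
    (ε : ℝ) (hε : 0 < ε)
    (𝒞 : Set (Matrix (Fin M) (Fin M) ℝ)) (h𝒞 : 𝒞.Nonempty)
    (CV : Matrix (Fin M) (Fin M) ℝ) (hCV : CV ∈ 𝒞)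
    (hdrain : CVᵀ.mulVec (fun _ => 1) - CV.mulVec (fun _ => 1) + x =
      fun _ => -ε)
    (Cstar : Matrix (Fin M) (Fin M) ℝ) (hCstar : Cstar ∈ 𝒞)
    (hmax : ∀ C ∈ 𝒞, q ⬝ᵥ ((C - Cᵀ).mulVec (fun _ => 1)) ≤
      q ⬝ᵥ ((Cstar - Cstarᵀ).mulVec (fun _ => 1))) :
    q ⬝ᵥ ((Cstarᵀ - Cstar).mulVec (fun _ => 1)) + q ⬝ᵥ x ≤
      -ε * ∑ i, q i := by
  have h1 := hmax CV hCV
  have key : q ⬝ᵥ ((Cstarᵀ - Cstar).mulVec (fun _ => 1)) ≤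
      q ⬝ᵥ ((CVᵀ - CV).mulVec (fun _ => 1)) := by
    have e1 : (Cstarᵀ - Cstar) = -(Cstar - Cstarᵀ) := (neg_sub _ _).symm
    have e2 : (CVᵀ - CV) = -(CV - CVᵀ) := (neg_sub _ _).symm
    rw [e1, e2, Matrix.neg_mulVec, Matrix.neg_mulVec, dotProduct_neg,
      dotProduct_neg]
    linarith
  have h2 : q ⬝ᵥ ((CVᵀ - CV).mulVec (fun _ => 1)) + q ⬝ᵥ x = -ε * ∑ i, q i := by
    have : (CVᵀ - CV).mulVec (fun _ => 1) + x = fun _ => -ε := by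
      rw [Matrix.sub_mulVec]
      exact hdrain
    calc q ⬝ᵥ ((CVᵀ - CV).mulVec (fun _ => 1)) + q ⬝ᵥ x
        = q ⬝ᵥ ((CVᵀ - CV).mulVec (fun _ => 1) + x) := by
          rw [dotProduct_add]
      _ = q ⬝ᵥ (fun _ => -ε) := by rw [this]
      _ = -ε * ∑ i, q i := by
          simp [dotProduct, Finset.mul_sum, mul_comm]
  linarith
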